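/- arXiv:2110.14829 — 3 statements merged into one kernel-verified Lean document; each statement's English description precedes it below -/
import Mathlib

section
/- Let k be a field, let (X_r)_{r≥0} be a sequence of schemes of finite type over k, and for each r ≥ 1 let π_r : X_r → X_{r−1} be a k-morphism. Suppose that for each r ≥ 0 we are given a nonempty constructible subset T_r ⊆ X_r such that π_r maps T_r into T_{r−1} for every r ≥ 1. Then there exists a compatible sequence of points (j_r)_{r≥0}, i.e. points j_r of the underlying topological space of X_r with j_r ∈ T_r for all r ≥ 0 and π_r(j_r) = j_{r−1} for all r ≥ 1. -/
open AlgebraicGeometry CategoryTheory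

/-- A subset of a topological space is *constructible* if it is a finite union of
locally closed subsets. -/
def IsConstructibleSet {X : Type*} [TopologicalSpace X] (s : Set X) : Prop :=
  ∃ S : Finset (Set X), (∀ t ∈ S, IsLocallyClosed t) ∧ s = ⋃ t ∈ S, t

open TopologicalSpace Set

namespace JetAux

variable {X : Type*} [TopologicalSpace X]

/-- A set `C` "catches generic points": if `x` is in the closure of the part of `C`
below `x` (specializations-wise), then `x ∈ C`. -/
def Gd (C : Set X) : Prop := ∀ x : X, x ∈ closure (C ∩ closure {x}) → x ∈ C

lemma Gd.inter {C D : Set X} (hC : Gd C) (hD : Gd D) : Gd (C ∩ D) := by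
  intro x hx
  exact ⟨hC x (closure_mono (by intro y hy; exact ⟨hy.1.1, hy.2⟩) hx),
    hD x (closure_mono (by intro y hy; exact ⟨hy.1.2, hy.2⟩) hx)⟩

lemma Gd.of_isClosed {C : Set X} (hC : IsClosed C) : Gd C := by
  intro x hx
  exact (hC.closure_subset_iff.mpr inter_subset_left) hx

lemma Gd.of_isLocallyClosed {C : Set X} (hC : IsLocallyClosed C) : Gd C := by
  obtain ⟨U, Z, hU, hZ, rfl⟩ := hC
  intro x hx
  have hne : (U ∩ Z ∩ closure {x}).Nonempty := by
    by_contra h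
    rw [not_nonempty_iff_eq_empty] at h
    rw [h, closure_empty] at hx
    exact hx
  obtain ⟨s, hs⟩ := hne
  have hxU : x ∈ U := by
    have := hs.2
    rw [mem_closure_iff] at this
    obtain ⟨y, hy1, hy2⟩ := this U hU hs.1.1
    rwa [mem_singleton_iff.mp hy2] at hy1
  have hxZ : x ∈ Z :=
    (hZ.closure_subset_iff.mpr (fun y hy => hy.1.2)) hx
  exact ⟨hxU, hxZ⟩

lemma Gd.of_constructible {C : Set X} (hC : IsConstructibleSet C) : Gd C := by
  obtain ⟨S, hlc, rfl⟩ := hC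
  intro x hx
  have : (⋃ t ∈ S, t) ∩ closure {x} = ⋃ t ∈ S, (t ∩ closure {x}) := by
    rw [Set.iUnion₂_inter]
  rw [this, S.closure_biUnion] at hx
  obtain ⟨t, ht, hxt⟩ := Set.mem_iUnion₂.mp hx
  exact Set.mem_iUnion₂.mpr ⟨t, ht, Gd.of_isLocallyClosed (hlc t ht) x hxt⟩

lemma Gd.fiber {Y : Type*} [TopologicalSpace Y] [T0Space Y] {f : X → Y}
    (hf : Continuous f) (y : Y) : Gd (f ⁻¹' {y}) := by
  intro x hx
  have hne : (f ⁻¹' {y} ∩ closure {x}).Nonempty := by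
    by_contra h
    rw [not_nonempty_iff_eq_empty] at h
    rw [h, closure_empty] at hx
    exact hx
  obtain ⟨w, hw1, hw2⟩ := hne
  -- w ∈ closure {x}, so f w ∈ closure {f x}; f w = y
  have h1 : y ∈ closure {f x} := by
    have := (hf.closure_preimage_subset {f x})
    have hw : w ∈ closure (f ⁻¹' {f x}) := closure_mono (by simp) hw2
    have := (hf.closure_preimage_subset {f x}) hw
    rwa [← mem_singleton_iff.mp hw1]
  have h2 : f x ∈ closure {y} := by
    have hsub : closure (f ⁻¹' {y} ∩ closure {x}) ⊆ f ⁻¹' closure {y} := by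
      have : f ⁻¹' {y} ⊆ f ⁻¹' closure {y} := preimage_mono subset_closure
      rw [← (IsClosed.preimage hf isClosed_closure).closure_eq]
      exact closure_mono (fun z hz => this hz.1)
    exact hsub hx
  have : f x = y := (((specializes_iff_mem_closure).mpr h1).antisymm
    ((specializes_iff_mem_closure).mpr h2)).eq
  exact this

/-- In a noetherian sober space, a `Gd` set is covered by the closures of finitely many
of its points. -/
theorem Gd.exists_finset_generic [NoetherianSpace X] [QuasiSober X] {C : Set X} (hC : Gd C) :
    ∃ G : Finset X, ↑G ⊆ C ∧ C ⊆ ⋃ g ∈ G, closure {g} := by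
  have key : ∀ Z : Closeds X, ∀ C : Set X, Gd C → C ⊆ (Z : Set X) →
      ∃ G : Finset X, ↑G ⊆ C ∧ C ⊆ ⋃ g ∈ G, closure {g} := by
    intro Z
    induction Z using WellFoundedLT.induction with
    | _ Z IH =>
      intro C hC hCZ
      rcases Set.eq_empty_or_nonempty C with rfl | hne
      · exact ⟨∅, by simp, by simp⟩
      have hclZ : closure C ⊆ (Z : Set X) := Z.2.closure_subset_iff.mpr hCZ
      by_cases hlt : Closeds.closure C < Z
      · exact IH _ hlt C hC subset_closure
      have hZeq : (Z : Set X) = closure C := by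
        have hle : Closeds.closure C ≤ Z := hclZ
        have := hle.lt_or_eq.resolve_left hlt
        rw [← this]; rfl
      by_cases hirr : IsPreirreducible (closure C)
      · have hi : IsIrreducible (closure C) := ⟨hne.closure, hirr⟩
        obtain ⟨ξ, hξ⟩ := QuasiSober.sober hi isClosed_closure
        have hξC : ξ ∈ C := by
          apply hC
          have : C ∩ closure {ξ} = C := by
            rw [hξ]; exact inter_eq_left.mpr subset_closure
          rw [this, ← hξ]
          exact subset_closure rfl
        exact ⟨{ξ}, by simpa, by
          intro c hc
          simp only [Finset.mem_singleton, Set.mem_iUnion]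
          exact ⟨ξ, rfl, hξ ▸ subset_closure hc⟩⟩
      · rw [IsPreirreducible] at hirr
        push_neg at hirr
        obtain ⟨u, v, hu, hv, hcu, hcv, hdisj⟩ := hirr
        have huZ : (Z : Set X) ∩ u ≠ ∅ := by
          rw [hZeq]; exact hcu.ne_empty
        -- define the two smaller closed sets
        have h1 : Closeds.mk ((Z : Set X) ∩ uᶜ) (Z.2.inter hu.isClosed_compl) < Z := by
          rw [lt_iff_le_and_ne]
          constructor
          · exact inter_subset_left
          · intro h
            obtain ⟨p, hp⟩ := hcu
            have hpZ : p ∈ (Z : Set X) := hZeq ▸ hp.1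
            have hcoe := congrArg (fun W : Closeds X => (W : Set X)) h
            simp only [Closeds.coe_mk] at hcoe
            rw [← hcoe] at hpZ
            exact hpZ.2 hp.2
        have h2 : Closeds.mk ((Z : Set X) ∩ vᶜ) (Z.2.inter hv.isClosed_compl) < Z := by
          rw [lt_iff_le_and_ne]
          constructor
          · exact inter_subset_left
          · intro h
            obtain ⟨p, hp⟩ := hcv
            have hpZ : p ∈ (Z : Set X) := hZeq ▸ hp.1
            have hcoe := congrArg (fun W : Closeds X => (W : Set X)) h
            simp only [Closeds.coe_mk] at hcoe
            rw [← hcoe] at hpZ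
            exact hpZ.2 hp.2
        obtain ⟨G1, hG1C, hG1cov⟩ := IH _ h1 (C ∩ uᶜ) (hC.inter (Gd.of_isClosed hu.isClosed_compl))
          (fun c hc => ⟨hCZ hc.1, hc.2⟩)
        obtain ⟨G2, hG2C, hG2cov⟩ := IH _ h2 (C ∩ vᶜ) (hC.inter (Gd.of_isClosed hv.isClosed_compl))
          (fun c hc => ⟨hCZ hc.1, hc.2⟩)
        classical
        refine ⟨G1 ∪ G2, ?_, ?_⟩
        · intro g hg
          rcases Finset.mem_union.mp (by exact_mod_cast hg) with h | h
          · exact (hG1C h).1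
          · exact (hG2C h).1
        · intro c hc
          have hcnotuv : c ∉ u ∩ v := by
            intro hcuv
            have : c ∈ closure C ∩ (u ∩ v) := ⟨subset_closure hc, hcuv⟩
            rw [hdisj] at this
            exact this
          rcases not_and_or.mp hcnotuv with h | h
          · have := hG1cov ⟨hc, h⟩
            simp only [Set.mem_iUnion] at this ⊢
            obtain ⟨g, hg, hcg⟩ := this
            exact ⟨g, Finset.mem_union_left _ hg, hcg⟩
          · have := hG2cov ⟨hc, h⟩
            simp only [Set.mem_iUnion] at this ⊢
            obtain ⟨g, hg, hcg⟩ := this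
            exact ⟨g, Finset.mem_union_right _ hg, hcg⟩
  exact key ⊤ C hC (by simp)

/-- The image of a `Gd` set under a continuous map from a noetherian sober space to a
T0 space is again `Gd`. -/
theorem Gd.image [NoetherianSpace X] [QuasiSober X] {Y : Type*} [TopologicalSpace Y] [T0Space Y]
    {f : X → Y} (hf : Continuous f) {C : Set X} (hC : Gd C) : Gd (f '' C) := by
  intro y hy
  have hC0 : Gd (C ∩ f ⁻¹' closure {y}) :=
    hC.inter (Gd.of_isClosed (IsClosed.preimage hf isClosed_closure))
  obtain ⟨G, hGC, hGcov⟩ := hC0.exists_finset_generic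
  -- f '' C ∩ closure {y} ⊆ f '' (C ∩ f ⁻¹' closure {y})
  have him : f '' C ∩ closure {y} = f '' (C ∩ f ⁻¹' closure {y}) := by
    rw [Set.image_inter_preimage]
  have hcov : f '' (C ∩ f ⁻¹' closure {y}) ⊆ ⋃ g ∈ G, closure {f g} := by
    intro z hz
    obtain ⟨c, hc, rfl⟩ := hz
    have := hGcov hc
    simp only [Set.mem_iUnion] at this ⊢
    obtain ⟨g, hg, hcg⟩ := this
    refine ⟨g, hg, ?_⟩
    have : closure ({g} : Set X) ⊆ f ⁻¹' closure {f g} := by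
      rw [← (IsClosed.preimage hf isClosed_closure).closure_eq]
      exact closure_mono (by simp; exact subset_closure rfl)
    exact this hcg
  have hclosed : IsClosed (⋃ g ∈ G, closure ({f g} : Set Y)) :=
    G.finite_toSet.isClosed_biUnion (fun g _ => isClosed_closure)
  have hy2 : y ∈ ⋃ g ∈ G, closure ({f g} : Set Y) := by
    have : closure (f '' C ∩ closure {y}) ⊆ ⋃ g ∈ G, closure ({f g} : Set Y) := by
      rw [← hclosed.closure_eq]
      exact closure_mono (him ▸ hcov)
    exact this hy
  simp only [Set.mem_iUnion] at hy2
  obtain ⟨g, hg, hyg⟩ := hy2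
  have hgy : f g ∈ closure {y} := (hGC hg).2
  have : f g = y := (((specializes_iff_mem_closure).mpr hyg).antisymm
    ((specializes_iff_mem_closure).mpr hgy)).eq
  exact ⟨g, (hGC hg).1, this⟩

/-- A decreasing sequence of nonempty `Gd` subsets of a noetherian sober T0 space has
nonempty intersection. -/
theorem Gd.iInter_nonempty [NoetherianSpace X] [QuasiSober X] [T0Space X]
    {D : ℕ → Set X} (hgd : ∀ n, Gd (D n)) (hanti : ∀ m n, m ≤ n → D n ⊆ D m)
    (hne : ∀ n, (D n).Nonempty) : (⋂ n, D n).Nonempty := by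
  classical
  -- closures stabilize
  set Zc : ℕ → Closeds X := fun n => Closeds.closure (D n) with hZc
  obtain ⟨m, ⟨N, rfl⟩, hmin⟩ := (wellFounded_lt (α := Closeds X)).has_min
    (Set.range Zc) ⟨Zc 0, ⟨0, rfl⟩⟩
  have hstab : ∀ n, N ≤ n → Zc n = Zc N := by
    intro n hn
    have hle : Zc n ≤ Zc N := by
      simp only [hZc]
      exact closure_mono (hanti N n hn)
    rcases hle.lt_or_eq with h | h
    · exact absurd h (hmin _ ⟨n, rfl⟩)
    · exact h
  obtain ⟨G, hGC, hGcov⟩ := (hgd N).exists_finset_generic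
  have hGne : G.Nonempty := by
    obtain ⟨x, hx⟩ := hne N
    have := hGcov hx
    simp only [Set.mem_iUnion] at this
    obtain ⟨g, hg, _⟩ := this
    exact ⟨g, hg⟩
  obtain ⟨g, hgG, hgmax⟩ := Set.Finite.exists_maximalFor
    (fun g : X => closure ({g} : Set X)) ↑G G.finite_toSet
    (by exact_mod_cast hGne)
  have hkey : ∀ n, N ≤ n → g ∈ D n := by
    intro n hn
    -- D n ⊆ ⋃ g' ∈ G, closure {g'}
    have hsub : D n ⊆ ⋃ g' ∈ G, closure ({g'} : Set X) :=
      fun x hx => hGcov (hanti N n hn hx)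
    have hDn : D n = ⋃ g' ∈ G, (D n ∩ closure ({g'} : Set X)) := by
      apply subset_antisymm
      · intro x hx
        have := hsub hx
        simp only [Set.mem_iUnion] at this ⊢
        obtain ⟨g', hg', hxg⟩ := this
        exact ⟨g', hg', hx, hxg⟩
      · exact Set.iUnion₂_subset fun g' _ => inter_subset_left
    have hgcl : g ∈ closure (D n) := by
      have h1 : g ∈ closure (D N) := subset_closure (hGC hgG)
      have : Zc n = Zc N := hstab n hn
      have h2 : closure (D n) = closure (D N) := congrArg (fun Z : Closeds X => (Z : Set X)) this
      rw [h2]; exact h1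
    rw [hDn] at hgcl
    conv at hgcl => rw [Finset.closure_biUnion]
    simp only [Set.mem_iUnion] at hgcl
    obtain ⟨g1, hg1, hgg1⟩ := hgcl
    have hsub1 : closure ({g} : Set X) ⊆ closure ({g1} : Set X) := by
      have hmem : g ∈ closure ({g1} : Set X) := by
        have h1 : closure (D n ∩ closure ({g1} : Set X)) ⊆ closure ({g1} : Set X) :=
          isClosed_closure.closure_subset_iff.mpr inter_subset_right
        exact h1 hgg1
      exact closure_minimal (Set.singleton_subset_iff.mpr hmem) isClosed_closure
    have heq : closure ({g} : Set X) = closure ({g1} : Set X) :=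
      hsub1.antisymm (hgmax (by exact_mod_cast hg1) hsub1)
    apply hgd n
    rw [heq]
    exact hgg1
  refine ⟨g, Set.mem_iInter.mpr fun n => ?_⟩
  rcases le_or_gt N n with h | h
  · exact hkey n h
  · exact hanti n N h.le (hkey N le_rfl)

end JetAux


open AlgebraicGeometry CategoryTheory JetAux

/-- The iterated images of the sets `T` under the transition maps. -/
private def jetS (X : ℕ → Scheme) (π : ∀ r : ℕ, X (r + 1) ⟶ X r)
    (T : ∀ r : ℕ, Set (X r)) : ℕ → ∀ r : ℕ, Set (X r)
  | 0 => T
  | d + 1 => fun r => (π r).base '' jetS X π T d (r + 1)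

/-- Given a sequence of schemes of finite type over a field `k`, `k`-morphisms
`π r : X (r+1) ⟶ X r`, and nonempty constructible subsets `T r ⊆ X r` with
`π r` mapping `T (r+1)` into `T r`, there is a compatible sequence of points
`j r ∈ T r` with `π r (j (r+1)) = j r`. -/
theorem compatible_sequence_of_jets
    (k : Type) [Field k]
    (X : ℕ → Scheme) (f : ∀ r : ℕ, X r ⟶ Spec (CommRingCat.of k))
    (hft : ∀ r : ℕ, LocallyOfFiniteType (f r)) (hqc : ∀ r : ℕ, QuasiCompact (f r))
    (π : ∀ r : ℕ, X (r + 1) ⟶ X r)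
    (hπ : ∀ r : ℕ, π r ≫ f r = f (r + 1))
    (T : ∀ r : ℕ, Set (X r))
    (hne : ∀ r : ℕ, (T r).Nonempty)
    (hcon : ∀ r : ℕ, IsConstructibleSet (T r))
    (hmap : ∀ r : ℕ, (π r).base '' T (r + 1) ⊆ T r) :
    ∃ j : ∀ r : ℕ, X r, (∀ r : ℕ, j r ∈ T r) ∧
      ∀ r : ℕ, (π r).base (j (r + 1)) = j r := by
  -- every `X r` is a noetherian topological space
  have hN : ∀ r, TopologicalSpace.NoetherianSpace (X r) := by
    intro r
    have hcs : CompactSpace (X r) := (quasiCompact_iff_compactSpace (f r)).mp (hqc r)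
    have hln : IsLocallyNoetherian (X r) := by
      constructor
      intro U
      have hFT : RingHom.FiniteType ((f r).appLE ⊤ U le_top).hom :=
        (HasRingHomProperty.iff_appLE (P := @LocallyOfFiniteType)).mp (hft r)
          ⟨⊤, isAffineOpen_top _⟩ U le_top
      haveI hNk : IsNoetherianRing Γ(Spec (CommRingCat.of k), ⊤) :=
        isNoetherianRing_of_ringEquiv k
          ((Scheme.ΓSpecIso (CommRingCat.of k)).symm.commRingCatIsoToRingEquiv)
      letI := ((f r).appLE ⊤ U le_top).hom.toAlgebra
      haveI : Algebra.FiniteType Γ(Spec (CommRingCat.of k), ⊤) Γ(X r, U.1) := hFT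
      exact Algebra.FiniteType.isNoetherianRing Γ(Spec (CommRingCat.of k), ⊤) Γ(X r, U.1)
    haveI : IsNoetherian (X r) := { toIsLocallyNoetherian := hln, toCompactSpace := hcs }
    infer_instance
  -- the iterated images
  set S : ℕ → ∀ r : ℕ, Set (X r) := jetS X π T with hS
  have hS0 : ∀ r, S 0 r = T r := fun r => rfl
  have hSsucc : ∀ d r, S (d + 1) r = (π r).base '' S d (r + 1) := fun d r => rfl
  -- each is Gd
  have hGd : ∀ d r, Gd (S d r) := by
    intro d
    induction d with
    | zero => exact fun r => Gd.of_constructible (hcon r)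
    | succ d IH =>
      intro r
      haveI := hN (r + 1)
      exact Gd.image ((π r).base.hom.continuous) (IH (r + 1))
  -- each is nonempty
  have hSne : ∀ d r, (S d r).Nonempty := by
    intro d
    induction d with
    | zero => exact hne
    | succ d IH => exact fun r => ((IH (r + 1)).image _)
  -- decreasing in d
  have hmono : ∀ d r, S (d + 1) r ⊆ S d r := by
    intro d
    induction d with
    | zero => exact fun r => hmap r
    | succ d IH => exact fun r => Set.image_mono (IH (r + 1))
  have hanti : ∀ r m n, m ≤ n → S n r ⊆ S m r := by
    intro r m n hmn
    induction hmn with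
    | refl => exact subset_rfl
    | step _ IH => exact fun x hx => IH (hmono _ r hx)
  -- key compatibility: the image of S d (r+1) under π r is S (d+1) r
  -- nonemptiness of the intersections
  have h0 : (⋂ d, S d 0).Nonempty := by
    haveI := hN 0
    exact Gd.iInter_nonempty (fun d => hGd d 0) (fun m n h => hanti 0 m n h) (fun d => hSne d 0)
  -- the step: lifting a point of the intersection
  have hstep : ∀ r (x : X r), x ∈ (⋂ d, S d r) →
      ∃ y : X (r + 1), y ∈ (⋂ d, S d (r + 1)) ∧ (π r).base y = x := by
    intro r x hx
    haveI := hN (r + 1)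
    have hD : (⋂ d, (S d (r + 1) ∩ (π r).base ⁻¹' {x})).Nonempty := by
      apply Gd.iInter_nonempty
      · exact fun d => (hGd d (r + 1)).inter (Gd.fiber ((π r).base.hom.continuous) x)
      · exact fun m n h => Set.inter_subset_inter_left _ (hanti (r + 1) m n h)
      · intro d
        have hx' : x ∈ S (d + 1) r := Set.mem_iInter.mp hx (d + 1)
        rw [hSsucc d r] at hx'
        obtain ⟨y, hy, hyx⟩ := hx'
        exact ⟨y, hy, hyx⟩
    obtain ⟨y, hy⟩ := hD
    refine ⟨y, Set.mem_iInter.mpr fun d => (Set.mem_iInter.mp hy d).1,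
      (Set.mem_iInter.mp hy 0).2⟩
  -- build the sequence by recursion and choice
  choose F hF1 hF2 using hstep
  obtain ⟨x0, hx0⟩ := h0
  let jj : ∀ r : ℕ, {x : X r // x ∈ ⋂ d, S d r} :=
    fun r => Nat.rec ⟨x0, hx0⟩ (fun r p => ⟨F r p.1 p.2, hF1 r p.1 p.2⟩) r
  refine ⟨fun r => (jj r).1, fun r => ?_, fun r => ?_⟩
  · have := Set.mem_iInter.mp (jj r).2 0
    rwa [hS0 r] at this
  · exact hF2 r (jj r).1 (jj r).2
end

section
/- Let X be a Noetherian sober topological space and let E_0 ⊇ E_1 ⊇ E_2 ⊇ ⋯ be a descending sequence of nonempty constructible subsets of X. Then the intersection ⋂_{r≥0} E_r is nonempty. -/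
open Set TopologicalSpace

/-- In a Noetherian space, an antitone sequence of closed sets stabilizes. -/
lemma antitone_closeds_stabilize {X : Type*} [TopologicalSpace X]
    [TopologicalSpace.NoetherianSpace X] (F : ℕ → Closeds X) (hF : Antitone F) :
    ∃ N, ∀ m, N ≤ m → F m = F N := by
  obtain ⟨Z, ⟨N, rfl⟩, hmin⟩ :=
    (wellFounded_lt : WellFounded ((· < ·) : Closeds X → Closeds X → Prop)).has_min
      (Set.range F) ⟨F 0, Set.mem_range_self 0⟩
  refine ⟨N, fun m hm => ?_⟩
  have hle : F m ≤ F N := hF hm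
  rcases eq_or_lt_of_le hle with h | h
  · exact h
  · exact absurd h (hmin (F m) (Set.mem_range_self m))

/-- In a Noetherian sober topological space, a descending sequence of nonempty
constructible subsets has nonempty intersection. -/
theorem descending_constructible_inter_nonempty
    (X : Type*) [TopologicalSpace X] [TopologicalSpace.NoetherianSpace X] [QuasiSober X]
    (E : ℕ → Set X)
    (hdesc : ∀ r : ℕ, E (r + 1) ⊆ E r)
    (hne : ∀ r : ℕ, (E r).Nonempty)
    (hcon : ∀ r : ℕ, IsConstructibleSet (E r)) :
    (⋂ r : ℕ, E r).Nonempty := by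
  classical
  have hmono : Antitone E := antitone_nat_of_succ_le hdesc
  -- The family of nonempty closed sets `C` with `C ⊆ closure (E r ∩ C)` for all `r`.
  set 𝒮 : Set (Closeds X) :=
    {C | (C : Set X).Nonempty ∧ ∀ r, (C : Set X) ⊆ closure (E r ∩ C)} with h𝒮
  -- `𝒮` is nonempty: the stable value of `closure (E r)` belongs to it.
  have h𝒮ne : 𝒮.Nonempty := by
    obtain ⟨N, hN⟩ := antitone_closeds_stabilize
      (fun r => ⟨closure (E r), isClosed_closure⟩)
      (fun a b hab => closure_mono (hmono hab))
    refine ⟨⟨closure (E N), isClosed_closure⟩, (hne N).mono subset_closure, fun r => ?_⟩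
    have h1 : E (max r N) ⊆ E r ∩ closure (E N) := by
      refine subset_inter (hmono (le_max_left r N)) ?_
      have := congrArg (fun C : Closeds X => (C : Set X)) (hN (max r N) (le_max_right r N))
      calc E (max r N) ⊆ closure (E (max r N)) := subset_closure
        _ = closure (E N) := this
    have h2 : closure (E (max r N)) = closure (E N) :=
      congrArg (fun C : Closeds X => (C : Set X)) (hN (max r N) (le_max_right r N))
    calc (⟨closure (E N), isClosed_closure⟩ : Closeds X) = closure (E (max r N)) := h2.symm
      _ ⊆ closure (E r ∩ closure (E N)) := closure_mono h1
  -- Take a minimal element of `𝒮`.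
  obtain ⟨C, ⟨hCne, hCsub⟩, hCmin⟩ :=
    (wellFounded_lt : WellFounded ((· < ·) : Closeds X → Closeds X → Prop)).has_min 𝒮 h𝒮ne
  -- Minimality: any closed `F ⊊ C` with the defining property leads to a contradiction.
  have key : ∀ F : Closeds X, (F : Set X).Nonempty →
      (∀ r, (F : Set X) ⊆ closure (E r ∩ F)) → (F : Set X) ⊆ C → F = C := by
    intro F hFne hFsub hle
    by_contra hne'
    refine hCmin F ⟨hFne, hFsub⟩ (lt_of_le_of_ne (SetLike.coe_subset_coe.mp hle) hne')
  -- `C` is irreducible.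
  have hCirr : IsIrreducible (C : Set X) := by
    refine ⟨hCne, (isPreirreducible_iff_isClosed_union_isClosed).mpr ?_⟩
    intro z₁ z₂ hz₁ hz₂ hcover
    by_contra hcon'
    push_neg at hcon'
    obtain ⟨hnz₁, hnz₂⟩ := hcon'
    set A : Set X := z₁ ∩ C with hA
    set B : Set X := z₂ ∩ C with hB
    have hABcover : (C : Set X) = A ∪ B := by
      rw [hA, hB, ← Set.union_inter_distrib_right, Set.inter_eq_right.mpr hcover]
    -- stabilize the closures of `E r ∩ A` and `E r ∩ B`
    obtain ⟨N₁, hN₁⟩ := antitone_closeds_stabilize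
      (fun r => ⟨closure (E r ∩ A), isClosed_closure⟩)
      (fun a b hab => closure_mono (Set.inter_subset_inter_left A (hmono hab)))
    obtain ⟨N₂, hN₂⟩ := antitone_closeds_stabilize
      (fun r => ⟨closure (E r ∩ B), isClosed_closure⟩)
      (fun a b hab => closure_mono (Set.inter_subset_inter_left B (hmono hab)))
    set N := max N₁ N₂ with hNdef
    set F : Set X := closure (E N ∩ A) with hF
    set G : Set X := closure (E N ∩ B) with hG
    have hFstab : ∀ m, N ≤ m → closure (E m ∩ A) = F := by
      intro m hm
      have e1 := hN₁ m (le_trans (le_max_left _ _) hm)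
      have e2 := hN₁ N (le_max_left _ _)
      have := e1.trans e2.symm
      exact congrArg (fun C : Closeds X => (C : Set X)) this
    have hGstab : ∀ m, N ≤ m → closure (E m ∩ B) = G := by
      intro m hm
      have e1 := hN₂ m (le_trans (le_max_right _ _) hm)
      have e2 := hN₂ N (le_max_right _ _)
      exact congrArg (fun C : Closeds X => (C : Set X)) (e1.trans e2.symm)
    have hFsubA : F ⊆ A := closure_minimal Set.inter_subset_right
      (hz₁.inter C.isClosed)
    have hGsubB : G ⊆ B := closure_minimal Set.inter_subset_right
      (hz₂.inter C.isClosed)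
    have hFprop : ∀ r, F ⊆ closure (E r ∩ F) := by
      intro r
      have h1 : E (max r N) ∩ A ⊆ E r ∩ F :=
        Set.subset_inter
          (Set.inter_subset_left.trans (hmono (le_max_left r N)))
          ((subset_closure).trans (le_of_eq (hFstab _ (le_max_right r N))))
      calc F = closure (E (max r N) ∩ A) := (hFstab _ (le_max_right r N)).symm
        _ ⊆ closure (E r ∩ F) := closure_mono h1
    have hGprop : ∀ r, G ⊆ closure (E r ∩ G) := by
      intro r
      have h1 : E (max r N) ∩ B ⊆ E r ∩ G :=
        Set.subset_inter
          (Set.inter_subset_left.trans (hmono (le_max_left r N)))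
          ((subset_closure).trans (le_of_eq (hGstab _ (le_max_right r N))))
      calc G = closure (E (max r N) ∩ B) := (hGstab _ (le_max_right r N)).symm
        _ ⊆ closure (E r ∩ G) := closure_mono h1
    have hFG : (C : Set X) ⊆ F ∪ G := by
      have : (C : Set X) ⊆ closure (E N ∩ C) := hCsub N
      have h2 : E N ∩ (C : Set X) = (E N ∩ A) ∪ (E N ∩ B) := by
        rw [hABcover]; exact Set.inter_union_distrib_left _ _ _
      calc (C : Set X) ⊆ closure (E N ∩ C) := this
        _ = closure ((E N ∩ A) ∪ (E N ∩ B)) := by rw [h2]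
        _ = F ∪ G := closure_union
    -- one of F, G is nonempty
    obtain ⟨x, hx⟩ := hCne
    rcases hFG hx with hxF | hxG
    · have hFC : F ⊆ (C : Set X) := hFsubA.trans (by rw [hA]; exact Set.inter_subset_right)
      have := key ⟨F, isClosed_closure⟩ ⟨x, hxF⟩ hFprop hFC
      have hCF : (C : Set X) = F := congrArg (fun C : Closeds X => (C : Set X)) this.symm
      exact hnz₁ (by rw [hCF]; exact hFsubA.trans (by rw [hA]; exact Set.inter_subset_left))
    · have hGC : G ⊆ (C : Set X) := hGsubB.trans (by rw [hB]; exact Set.inter_subset_right)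
      have := key ⟨G, isClosed_closure⟩ ⟨x, hxG⟩ hGprop hGC
      have hCG : (C : Set X) = G := congrArg (fun C : Closeds X => (C : Set X)) this.symm
      exact hnz₂ (by rw [hCG]; exact hGsubB.trans (by rw [hB]; exact Set.inter_subset_left))
  -- generic point of C
  obtain ⟨η, hη⟩ := QuasiSober.sober hCirr C.isClosed
  refine ⟨η, Set.mem_iInter.mpr fun r => ?_⟩
  -- C ⊆ closure (E r ∩ C); write E r as a finite union of locally closed sets
  obtain ⟨S, hSlc, hSeq⟩ := hcon r
  have hcover : (C : Set X) ⊆ ⋃ t ∈ S, closure (t ∩ C) := by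
    have h1 : E r ∩ (C : Set X) = ⋃ t ∈ S, (t ∩ C) := by
      rw [hSeq, Set.iUnion₂_inter]
    calc (C : Set X) ⊆ closure (E r ∩ C) := hCsub r
      _ = closure (⋃ t ∈ S, (t ∩ C)) := by rw [h1]
      _ = ⋃ t ∈ S, closure (t ∩ C) := S.closure_biUnion _
  -- irreducibility: C is inside one of the closures
  obtain ⟨z, hzmem, hzsub⟩ := (isIrreducible_iff_sUnion_isClosed.mp hCirr)
    (S.image (fun t => closure (t ∩ (C : Set X))))
    (by
      intro z hz
      obtain ⟨t, _, rfl⟩ := Finset.mem_image.mp hz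
      exact isClosed_closure)
    (by
      refine hcover.trans ?_
      intro x hx
      obtain ⟨t, ht, hxt⟩ := Set.mem_iUnion₂.mp hx
      exact ⟨closure (t ∩ C), Finset.mem_coe.mpr (Finset.mem_image_of_mem _ ht), hxt⟩)
  obtain ⟨t, htS, rfl⟩ := Finset.mem_image.mp hzmem
  -- so closure (t ∩ C) = C
  have htCsub : t ∩ (C : Set X) ⊆ C := Set.inter_subset_right
  have hclosEq : closure (t ∩ (C : Set X)) = C :=
    le_antisymm (closure_minimal htCsub C.isClosed) hzsub
  -- t is locally closed: t = U ∩ Z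
  obtain ⟨U, Z, hU, hZ, rfl⟩ := hSlc t htS
  -- η ∈ U: pick a point of (U ∩ Z) ∩ C ⊆ U, it lies in closure {η}
  have hnonempty : ((U ∩ Z) ∩ (C : Set X)).Nonempty := by
    by_contra h
    rw [Set.not_nonempty_iff_eq_empty] at h
    rw [h, closure_empty] at hclosEq
    exact hCne.ne_empty hclosEq.symm
  obtain ⟨x, hx⟩ := hnonempty
  have hxU : x ∈ U := hx.1.1
  have hxC : x ∈ (C : Set X) := hx.2
  have hηU : η ∈ U := by
    have hxcl : x ∈ closure ({η} : Set X) := by rw [hη]; exact hxC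
    obtain ⟨y, hyU, hy⟩ := mem_closure_iff.mp hxcl U hU hxU
    rwa [Set.mem_singleton_iff.mp hy] at hyU
  have hηZ : η ∈ Z := by
    have : (C : Set X) ⊆ Z := by
      rw [← hclosEq]
      exact closure_minimal (fun y hy => hy.1.2) hZ
    exact this hη.mem
  have hηE : η ∈ E r := by
    rw [hSeq]
    exact Set.mem_iUnion₂.mpr ⟨U ∩ Z, htS, ⟨hηU, hηZ⟩⟩
  exact hηE
end

section
/- Let K be a commutative ring containing ℚ (e.g. a field of characteristic zero), let n, m ≥ 1, and let C_1, …, C_n be m×m matrices with entries in the formal power series ring K[[x_1,…,x_n]] satisfying the integrability condition ∂_k C_ℓ − ∂_ℓ C_k = C_k·C_ℓ − C_ℓ·C_k for all 1 ≤ k, ℓ ≤ n (where ∂_ℓ denotes the formal partial derivative with respect to x_ℓ, applied entrywise). Then for every m×m matrix P with entries in K there exists an m×m matrix F with entries in K[[x_1,…,x_n]] whose constant term is P and which satisfies ∂_ℓ F = −F·C_ℓ for all 1 ≤ ℓ ≤ n. -/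
open MvPowerSeries

/-- The formal partial derivative `∂_ℓ` on multivariate formal power series:
the coefficient of `∂_ℓ f` at a monomial `s` is `(s ℓ + 1) · (coefficient of `f` at
`s + e_ℓ`)`. -/
noncomputable def fpderiv {K : Type*} [CommRing K] {n : ℕ} (ℓ : Fin n)
    (f : MvPowerSeries (Fin n) K) : MvPowerSeries (Fin n) K :=
  fun s => (s ℓ + 1 : ℕ) • MvPowerSeries.coeff (s + Finsupp.single ℓ 1) f

namespace FormalSolAux

open Finsupp Finset

/-! ### degree lemmas -/

lemma degree_eq_sum_univ {n : ℕ} (d : Fin n →₀ ℕ) : d.degree = ∑ i, d i := by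
  rw [Finsupp.degree]
  exact Finset.sum_subset (Finset.subset_univ _)
    (fun i _ hi => Finsupp.notMem_support_iff.1 hi)

lemma degree_add' {n : ℕ} (a b : Fin n →₀ ℕ) :
    (a + b).degree = a.degree + b.degree := by
  simp [degree_eq_sum_univ, Finsupp.add_apply, Finset.sum_add_distrib]

lemma degree_single_one {n : ℕ} (ℓ : Fin n) :
    (Finsupp.single ℓ 1 : Fin n →₀ ℕ).degree = 1 := by
  simp [degree_eq_sum_univ, Finsupp.single_apply]

lemma degree_le_left {n : ℕ} {u v t : Fin n →₀ ℕ} (h : u + v = t) :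
    u.degree ≤ t.degree := by
  subst h; rw [degree_add']; exact Nat.le_add_right _ _

/-! ### reindexing lemmas for antidiagonal sums -/

lemma reindex_fst {M : Type*} [AddCommMonoid M] {n : ℕ} (t : Fin n →₀ ℕ) (ℓ : Fin n)
    (f : (Fin n →₀ ℕ) × (Fin n →₀ ℕ) → M) :
    ∑ p ∈ Finset.HasAntidiagonal.antidiagonal (t + Finsupp.single ℓ 1), (p.1 : Fin n →₀ ℕ) ℓ • f p
      = ∑ q ∈ Finset.HasAntidiagonal.antidiagonal t,
          ((q.1 : Fin n →₀ ℕ) ℓ + 1) • f (q.1 + Finsupp.single ℓ 1, q.2) := by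
  classical
  rw [← Finset.sum_filter_of_ne
    (p := fun p : (Fin n →₀ ℕ) × (Fin n →₀ ℕ) => p.1 ℓ ≠ 0)
    (fun p _ h => by_contra fun h0 => h (by rw [not_ne_iff.1 h0, zero_smul]))]
  refine Finset.sum_nbij' (i := fun p => (p.1 - Finsupp.single ℓ 1, p.2))
    (j := fun q => (q.1 + Finsupp.single ℓ 1, q.2)) ?_ ?_ ?_ ?_ ?_
  · rintro ⟨u, v⟩ hp
    rw [Finset.mem_filter, Finset.HasAntidiagonal.mem_antidiagonal] at hp
    obtain ⟨h1, h2⟩ := hp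
    have hle : Finsupp.single ℓ 1 ≤ u :=
      Finsupp.single_le_iff.2 (Nat.one_le_iff_ne_zero.2 h2)
    have hc : u - Finsupp.single ℓ 1 + Finsupp.single ℓ 1 = u := tsub_add_cancel_of_le hle
    rw [Finset.HasAntidiagonal.mem_antidiagonal]
    have : (u - Finsupp.single ℓ 1 + v) + Finsupp.single ℓ 1 = t + Finsupp.single ℓ 1 := by
      rw [add_right_comm, hc, h1]
    exact add_right_cancel this
  · rintro ⟨u, v⟩ hq
    rw [Finset.HasAntidiagonal.mem_antidiagonal] at hq
    rw [Finset.mem_filter, Finset.HasAntidiagonal.mem_antidiagonal]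
    constructor
    · rw [add_right_comm, hq]
    · simp
  · rintro ⟨u, v⟩ hp
    rw [Finset.mem_filter, Finset.HasAntidiagonal.mem_antidiagonal] at hp
    have hle : Finsupp.single ℓ 1 ≤ u :=
      Finsupp.single_le_iff.2 (Nat.one_le_iff_ne_zero.2 hp.2)
    simp [tsub_add_cancel_of_le hle]
  · rintro ⟨u, v⟩ _
    simp [add_tsub_cancel_right]
  · rintro ⟨u, v⟩ hp
    rw [Finset.mem_filter, Finset.HasAntidiagonal.mem_antidiagonal] at hp
    have hle : Finsupp.single ℓ 1 ≤ u :=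
      Finsupp.single_le_iff.2 (Nat.one_le_iff_ne_zero.2 hp.2)
    have hc : u - Finsupp.single ℓ 1 + Finsupp.single ℓ 1 = u := tsub_add_cancel_of_le hle
    have hℓ : ((u - Finsupp.single ℓ 1 : Fin n →₀ ℕ)) ℓ + 1 = u ℓ := by
      rw [Finsupp.tsub_apply, Finsupp.single_eq_same]
      exact Nat.succ_pred_eq_of_pos (Nat.pos_of_ne_zero hp.2)
    simp only [hc, hℓ]

lemma reindex_snd {M : Type*} [AddCommMonoid M] {n : ℕ} (t : Fin n →₀ ℕ) (ℓ : Fin n)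
    (f : (Fin n →₀ ℕ) × (Fin n →₀ ℕ) → M) :
    ∑ p ∈ Finset.HasAntidiagonal.antidiagonal (t + Finsupp.single ℓ 1), (p.2 : Fin n →₀ ℕ) ℓ • f p
      = ∑ q ∈ Finset.HasAntidiagonal.antidiagonal t,
          ((q.2 : Fin n →₀ ℕ) ℓ + 1) • f (q.1, q.2 + Finsupp.single ℓ 1) := by
  classical
  rw [← Finset.sum_filter_of_ne
    (p := fun p : (Fin n →₀ ℕ) × (Fin n →₀ ℕ) => p.2 ℓ ≠ 0)
    (fun p _ h => by_contra fun h0 => h (by rw [not_ne_iff.1 h0, zero_smul]))]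
  refine Finset.sum_nbij' (i := fun p => (p.1, p.2 - Finsupp.single ℓ 1))
    (j := fun q => (q.1, q.2 + Finsupp.single ℓ 1)) ?_ ?_ ?_ ?_ ?_
  · rintro ⟨u, v⟩ hp
    rw [Finset.mem_filter, Finset.HasAntidiagonal.mem_antidiagonal] at hp
    obtain ⟨h1, h2⟩ := hp
    have hle : Finsupp.single ℓ 1 ≤ v :=
      Finsupp.single_le_iff.2 (Nat.one_le_iff_ne_zero.2 h2)
    have hc : v - Finsupp.single ℓ 1 + Finsupp.single ℓ 1 = v := tsub_add_cancel_of_le hle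
    rw [Finset.HasAntidiagonal.mem_antidiagonal]
    have : (u + (v - Finsupp.single ℓ 1)) + Finsupp.single ℓ 1 = t + Finsupp.single ℓ 1 := by
      rw [add_assoc, hc, h1]
    exact add_right_cancel this
  · rintro ⟨u, v⟩ hq
    rw [Finset.HasAntidiagonal.mem_antidiagonal] at hq
    rw [Finset.mem_filter, Finset.HasAntidiagonal.mem_antidiagonal]
    constructor
    · rw [← add_assoc, hq]
    · simp
  · rintro ⟨u, v⟩ hp
    rw [Finset.mem_filter, Finset.HasAntidiagonal.mem_antidiagonal] at hp
    have hle : Finsupp.single ℓ 1 ≤ v :=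
      Finsupp.single_le_iff.2 (Nat.one_le_iff_ne_zero.2 hp.2)
    simp [tsub_add_cancel_of_le hle]
  · rintro ⟨u, v⟩ _
    simp [add_tsub_cancel_right]
  · rintro ⟨u, v⟩ hp
    rw [Finset.mem_filter, Finset.HasAntidiagonal.mem_antidiagonal] at hp
    have hle : Finsupp.single ℓ 1 ≤ v :=
      Finsupp.single_le_iff.2 (Nat.one_le_iff_ne_zero.2 hp.2)
    have hc : v - Finsupp.single ℓ 1 + Finsupp.single ℓ 1 = v := tsub_add_cancel_of_le hle
    have hℓ : ((v - Finsupp.single ℓ 1 : Fin n →₀ ℕ)) ℓ + 1 = v ℓ := by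
      rw [Finsupp.tsub_apply, Finsupp.single_eq_same]
      exact Nat.succ_pred_eq_of_pos (Nat.pos_of_ne_zero hp.2)
    simp only [hc, hℓ]

/-! ### cancellation of natural scalars in ℚ-modules -/

lemma nsmul_cancel {M : Type*} [AddCommGroup M] [Module ℚ M] {c : ℕ} (hc : c ≠ 0)
    {x y : M} (h : c • x = c • y) : x = y := by
  have h' : (c : ℚ) • x = (c : ℚ) • y := by
    rw [Nat.cast_smul_eq_nsmul, Nat.cast_smul_eq_nsmul]; exact h
  have h2 := congrArg (fun z => ((c : ℚ))⁻¹ • z) h'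
  simpa [smul_smul, inv_mul_cancel₀ (show ((c : ℚ)) ≠ 0 from Nat.cast_ne_zero.2 hc)] using h2

end FormalSolAux

namespace FormalSolAux

open Finsupp Finset

variable {K : Type*} [CommRing K] [Algebra ℚ K] {n m : ℕ}

/-- The coefficients of the solution, defined by recursion on the degree of the monomial. -/
noncomputable def solCoeff
    (C : Fin n → Matrix (Fin m) (Fin m) (MvPowerSeries (Fin n) K))
    (P : Matrix (Fin m) (Fin m) K) (s : Fin n →₀ ℕ) : Matrix (Fin m) (Fin m) K :=
  if h : s = 0 then P
  else
    (-((s (s.support.min' (Finsupp.support_nonempty_iff.2 h)) : ℚ)⁻¹)) •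
      ∑ p ∈ (Finset.HasAntidiagonal.antidiagonal
          (s - Finsupp.single (s.support.min' (Finsupp.support_nonempty_iff.2 h)) 1)).attach,
        solCoeff C P (p.1).1 *
          (C (s.support.min' (Finsupp.support_nonempty_iff.2 h))).map
            (MvPowerSeries.coeff (p.1).2)
termination_by s.degree
decreasing_by
  · have hk : s.support.min' (Finsupp.support_nonempty_iff.2 h) ∈ s.support :=
      Finset.min'_mem _ _
    have hsk : s (s.support.min' (Finsupp.support_nonempty_iff.2 h)) ≠ 0 :=
      Finsupp.mem_support_iff.1 hk
    have hle : Finsupp.single (s.support.min' (Finsupp.support_nonempty_iff.2 h)) 1 ≤ s :=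
      Finsupp.single_le_iff.2 (Nat.one_le_iff_ne_zero.2 hsk)
    have hc : (s - Finsupp.single (s.support.min' (Finsupp.support_nonempty_iff.2 h)) 1) +
        Finsupp.single (s.support.min' (Finsupp.support_nonempty_iff.2 h)) 1 = s :=
      tsub_add_cancel_of_le hle
    have hdeg : (s - Finsupp.single (s.support.min' (Finsupp.support_nonempty_iff.2 h)) 1).degree
        + 1 = s.degree := by
      conv_rhs => rw [← hc]
      rw [degree_add', degree_single_one]
    have hp := p.2
    rw [Finset.HasAntidiagonal.mem_antidiagonal] at hp
    have := degree_le_left hp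
    omega

lemma solCoeff_zero (C : Fin n → Matrix (Fin m) (Fin m) (MvPowerSeries (Fin n) K))
    (P : Matrix (Fin m) (Fin m) K) : solCoeff C P 0 = P := by
  rw [solCoeff]; simp

lemma solCoeff_spec (C : Fin n → Matrix (Fin m) (Fin m) (MvPowerSeries (Fin n) K))
    (P : Matrix (Fin m) (Fin m) K) {s : Fin n →₀ ℕ} (h : s ≠ 0) :
    solCoeff C P s =
      (-((s (s.support.min' (Finsupp.support_nonempty_iff.2 h)) : ℚ)⁻¹)) •
        ∑ p ∈ Finset.HasAntidiagonal.antidiagonal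
            (s - Finsupp.single (s.support.min' (Finsupp.support_nonempty_iff.2 h)) 1),
          solCoeff C P p.1 *
            (C (s.support.min' (Finsupp.support_nonempty_iff.2 h))).map
              (MvPowerSeries.coeff p.2) := by
  conv_lhs => rw [solCoeff]
  rw [dif_neg h]
  congr 1
  exact Finset.sum_attach _ fun q : (Fin n →₀ ℕ) × (Fin n →₀ ℕ) =>
    solCoeff C P q.1 *
      (C (s.support.min' (Finsupp.support_nonempty_iff.2 h))).map
        (MvPowerSeries.coeff q.2)

/-- The solution matrix of power series. -/
noncomputable def Fsol (C : Fin n → Matrix (Fin m) (Fin m) (MvPowerSeries (Fin n) K))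
    (P : Matrix (Fin m) (Fin m) K) : Matrix (Fin m) (Fin m) (MvPowerSeries (Fin n) K) :=
  Matrix.of fun i j => (fun s => solCoeff C P s i j : MvPowerSeries (Fin n) K)

lemma map_coeff_Fsol (C : Fin n → Matrix (Fin m) (Fin m) (MvPowerSeries (Fin n) K))
    (P : Matrix (Fin m) (Fin m) K) (s : Fin n →₀ ℕ) :
    (Fsol C P).map (MvPowerSeries.coeff s) = solCoeff C P s := by
  ext i j
  rfl

lemma coeffM_mul (s : Fin n →₀ ℕ) (A B : Matrix (Fin m) (Fin m) (MvPowerSeries (Fin n) K)) :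
    (A * B).map (MvPowerSeries.coeff s)
      = ∑ p ∈ Finset.HasAntidiagonal.antidiagonal s,
          A.map (MvPowerSeries.coeff p.1) * B.map (MvPowerSeries.coeff p.2) := by
  ext i j
  simp only [Matrix.map_apply, Matrix.mul_apply, Matrix.sum_apply]
  rw [map_sum]
  simp_rw [MvPowerSeries.coeff_mul]
  rw [Finset.sum_comm]

lemma map_coeff_sub (s : Fin n →₀ ℕ) (A B : Matrix (Fin m) (Fin m) (MvPowerSeries (Fin n) K)) :
    (A - B).map (MvPowerSeries.coeff s)
      = A.map (MvPowerSeries.coeff s) - B.map (MvPowerSeries.coeff s) := by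
  ext i j
  simp [Matrix.map_apply, Matrix.sub_apply]

lemma map_coeff_fpderiv (A : Matrix (Fin m) (Fin m) (MvPowerSeries (Fin n) K))
    (ℓ : Fin n) (v : Fin n →₀ ℕ) :
    (A.map (fpderiv ℓ)).map (MvPowerSeries.coeff v)
      = (v ℓ + 1) • A.map (MvPowerSeries.coeff (v + Finsupp.single ℓ 1)) := by
  ext i j
  simp only [Matrix.map_apply, Matrix.smul_apply]
  rfl

end FormalSolAux

namespace FormalSolAux

open Finsupp Finset

variable {K : Type*} [CommRing K] [Algebra ℚ K] {n m : ℕ}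

lemma coeff_mul_expand (C : Fin n → Matrix (Fin m) (Fin m) (MvPowerSeries (Fin n) K))
    (P : Matrix (Fin m) (Fin m) K) (j : Fin n) (u : Fin n →₀ ℕ) :
    (Fsol C P * C j).map (MvPowerSeries.coeff u)
      = ∑ p ∈ Finset.HasAntidiagonal.antidiagonal u,
          solCoeff C P p.1 * (C j).map (MvPowerSeries.coeff p.2) := by
  rw [coeffM_mul]
  exact Finset.sum_congr rfl fun p _ => by rw [map_coeff_Fsol]

lemma step (C : Fin n → Matrix (Fin m) (Fin m) (MvPowerSeries (Fin n) K))
    (P : Matrix (Fin m) (Fin m) K) (D : ℕ)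
    (IH : ∀ u : Fin n →₀ ℕ, u.degree ≤ D → ∀ j : Fin n,
      (u j + 1) • solCoeff C P (u + Finsupp.single j 1)
        = -((Fsol C P * C j).map (MvPowerSeries.coeff u)))
    (t : Fin n →₀ ℕ) (ht : t.degree ≤ D) (ℓ k : Fin n) :
    (t ℓ + 1) • ((Fsol C P * C k).map
        (MvPowerSeries.coeff (t + Finsupp.single ℓ 1)))
      = -((Fsol C P * C ℓ * C k).map (MvPowerSeries.coeff t))
        + ((Fsol C P * (C k).map (fpderiv ℓ)).map (MvPowerSeries.coeff t)) := by
  rw [coeffM_mul, Finset.smul_sum]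
  have hsplit : ∀ p ∈ Finset.HasAntidiagonal.antidiagonal (t + Finsupp.single ℓ 1),
      (t ℓ + 1) • ((Fsol C P).map (MvPowerSeries.coeff p.1) *
          (C k).map (MvPowerSeries.coeff p.2))
        = (p.1 : Fin n →₀ ℕ) ℓ • ((Fsol C P).map (MvPowerSeries.coeff p.1) *
            (C k).map (MvPowerSeries.coeff p.2))
          + (p.2 : Fin n →₀ ℕ) ℓ • ((Fsol C P).map (MvPowerSeries.coeff p.1) *
              (C k).map (MvPowerSeries.coeff p.2)) := by
    intro p hp
    rw [Finset.HasAntidiagonal.mem_antidiagonal] at hp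
    have hpl : (p.1 : Fin n →₀ ℕ) ℓ + (p.2 : Fin n →₀ ℕ) ℓ = t ℓ + 1 := by
      have h2 := congrArg (fun w : Fin n →₀ ℕ => w ℓ) hp
      simpa [Finsupp.add_apply, Finsupp.single_eq_same] using h2
    rw [← hpl, add_smul]
  rw [Finset.sum_congr rfl hsplit, Finset.sum_add_distrib]
  have h1 : ∑ p ∈ Finset.HasAntidiagonal.antidiagonal (t + Finsupp.single ℓ 1),
      (p.1 : Fin n →₀ ℕ) ℓ • ((Fsol C P).map (MvPowerSeries.coeff p.1) *
        (C k).map (MvPowerSeries.coeff p.2))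
      = -((Fsol C P * C ℓ * C k).map (MvPowerSeries.coeff t)) := by
    rw [reindex_fst t ℓ (fun p => (Fsol C P).map (MvPowerSeries.coeff p.1) *
      (C k).map (MvPowerSeries.coeff p.2))]
    rw [coeffM_mul t (Fsol C P * C ℓ) (C k), ← Finset.sum_neg_distrib]
    apply Finset.sum_congr rfl
    intro q hq
    rw [Finset.HasAntidiagonal.mem_antidiagonal] at hq
    have hql : (q.1 : Fin n →₀ ℕ).degree ≤ D := le_trans (degree_le_left hq) ht
    rw [← smul_mul_assoc, map_coeff_Fsol, IH q.1 hql ℓ, neg_mul]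
  have h2 : ∑ p ∈ Finset.HasAntidiagonal.antidiagonal (t + Finsupp.single ℓ 1),
      (p.2 : Fin n →₀ ℕ) ℓ • ((Fsol C P).map (MvPowerSeries.coeff p.1) *
        (C k).map (MvPowerSeries.coeff p.2))
      = (Fsol C P * (C k).map (fpderiv ℓ)).map (MvPowerSeries.coeff t) := by
    rw [reindex_snd t ℓ (fun p => (Fsol C P).map (MvPowerSeries.coeff p.1) *
      (C k).map (MvPowerSeries.coeff p.2))]
    rw [coeffM_mul t (Fsol C P) ((C k).map (fpderiv ℓ))]
    apply Finset.sum_congr rfl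
    intro q hq
    rw [← mul_smul_comm, ← map_coeff_fpderiv]
  rw [h1, h2]

lemma Esol (C : Fin n → Matrix (Fin m) (Fin m) (MvPowerSeries (Fin n) K))
    (P : Matrix (Fin m) (Fin m) K)
    (hint : ∀ k ℓ : Fin n,
      (C ℓ).map (fpderiv k) - (C k).map (fpderiv ℓ) = C k * C ℓ - C ℓ * C k) :
    ∀ (N : ℕ) (s : Fin n →₀ ℕ), s.degree = N → ∀ ℓ : Fin n,
      (s ℓ + 1) • solCoeff C P (s + Finsupp.single ℓ 1)
        = -((Fsol C P * C ℓ).map (MvPowerSeries.coeff s)) := by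
  intro N
  induction N using Nat.strong_induction_on with
  | _ N IH =>
    intro s hs ℓ
    set w := s + Finsupp.single ℓ 1 with hw
    have hw0 : w ≠ 0 := by
      intro h0
      have h1 := congrArg (fun f : Fin n →₀ ℕ => f ℓ) h0
      simp [hw, Finsupp.add_apply, Finsupp.single_eq_same] at h1
    set k := w.support.min' (Finsupp.support_nonempty_iff.2 hw0) with hkdef
    have hkmem : k ∈ w.support := Finset.min'_mem _ _
    have hwk : w k ≠ 0 := Finsupp.mem_support_iff.1 hkmem
    have hspec := solCoeff_spec C P hw0
    rw [← hkdef] at hspec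
    by_cases hkl : k = ℓ
    · -- chosen index is ℓ itself
      rw [hkl] at hspec
      have hw_sub : w - Finsupp.single ℓ 1 = s := by
        rw [hw]; exact add_tsub_cancel_right _ _
      have hwlv : w ℓ = s ℓ + 1 := by
        rw [hw]; simp [Finsupp.add_apply, Finsupp.single_eq_same]
      rw [hwlv, hw_sub, ← coeff_mul_expand] at hspec
      have hne : ((s ℓ + 1 : ℕ) : ℚ) ≠ 0 := Nat.cast_ne_zero.2 (Nat.succ_ne_zero _)
      rw [hspec, ← Nat.cast_smul_eq_nsmul ℚ, smul_smul, mul_neg, mul_inv_cancel₀ hne,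
        neg_smul, one_smul]
    · -- chosen index k ≠ ℓ
      have hwkv : w k = s k := by
        rw [hw]
        simp [Finsupp.add_apply, Finsupp.single_apply,
          (show ¬ ℓ = k from fun h => hkl h.symm)]
      have hsk : s k ≠ 0 := by rw [← hwkv]; exact hwk
      have hle : Finsupp.single k 1 ≤ s :=
        Finsupp.single_le_iff.2 (Nat.one_le_iff_ne_zero.2 hsk)
      set t := s - Finsupp.single k 1 with htdef
      have hts : t + Finsupp.single k 1 = s := tsub_add_cancel_of_le hle
      have hsl : s ℓ = t ℓ := by
        rw [htdef, Finsupp.tsub_apply]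
        simp [Finsupp.single_apply, hkl]
      have hw_sub : w - Finsupp.single k 1 = t + Finsupp.single ℓ 1 := by
        rw [hw, ← hts, add_right_comm, add_tsub_cancel_right]
      have hdegt : t.degree + 1 = N := by
        rw [← hs, ← hts, degree_add', degree_single_one]
      have IH' : ∀ u : Fin n →₀ ℕ, u.degree ≤ t.degree → ∀ j : Fin n,
          (u j + 1) • solCoeff C P (u + Finsupp.single j 1)
            = -((Fsol C P * C j).map (MvPowerSeries.coeff u)) := by
        intro u hu j
        exact IH u.degree (by omega) u rfl j
      have claim1 := step C P t.degree IH' t le_rfl ℓ k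
      have claim2 := step C P t.degree IH' t le_rfl k ℓ
      rw [hwkv, hw_sub, ← coeff_mul_expand] at hspec
      have hne : ((s k : ℕ) : ℚ) ≠ 0 := Nat.cast_ne_zero.2 hsk
      have hFw : (s k : ℕ) • solCoeff C P w
          = -((Fsol C P * C k).map (MvPowerSeries.coeff (t + Finsupp.single ℓ 1))) := by
        rw [hspec, ← Nat.cast_smul_eq_nsmul ℚ, smul_smul, mul_neg, mul_inv_cancel₀ hne,
          neg_smul, one_smul]
      refine nsmul_cancel hsk ?_
      have hL : (s k) • ((s ℓ + 1) • solCoeff C P w)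
          = -(-((Fsol C P * C ℓ * C k).map (MvPowerSeries.coeff t))
              + ((Fsol C P * (C k).map (fpderiv ℓ)).map (MvPowerSeries.coeff t))) := by
        rw [smul_comm, hFw, smul_neg, hsl, claim1]
      have hskv : s k = t k + 1 := by
        rw [← hts]; simp [Finsupp.add_apply, Finsupp.single_eq_same]
      have hR : (s k) • (-((Fsol C P * C ℓ).map (MvPowerSeries.coeff s)))
          = -(-((Fsol C P * C k * C ℓ).map (MvPowerSeries.coeff t))
              + ((Fsol C P * (C ℓ).map (fpderiv k)).map (MvPowerSeries.coeff t))) := by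
        rw [smul_neg]
        conv_lhs => rw [hskv, ← hts]
        rw [claim2]
      rw [hL, hR]
      congr 1
      have hmat : (C k).map (fpderiv ℓ) - C ℓ * C k
          = (C ℓ).map (fpderiv k) - C k * C ℓ :=
        (sub_eq_sub_iff_sub_eq_sub.1 (hint k ℓ)).symm
      have hFmat : Fsol C P * ((C k).map (fpderiv ℓ) - C ℓ * C k)
          = Fsol C P * ((C ℓ).map (fpderiv k) - C k * C ℓ) := by rw [hmat]
      rw [mul_sub, mul_sub, ← mul_assoc, ← mul_assoc] at hFmat
      have hG := congrArg (fun X => Matrix.map X (MvPowerSeries.coeff t)) hFmat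
      simp only [map_coeff_sub] at hG
      rw [neg_add_eq_sub, neg_add_eq_sub]
      exact hG

end FormalSolAux

open FormalSolAux in
/-- Existence of formal solutions of the period matrix differential system:
over a commutative ring containing `ℚ`, if the matrices `C_1, …, C_n` of formal power
series satisfy the integrability condition
`∂_k C_ℓ − ∂_ℓ C_k = C_k·C_ℓ − C_ℓ·C_k`, then for every initial condition `P` there is a
matrix `F` of formal power series with constant term `P` satisfying `∂_ℓ F = −F·C_ℓ`
for all `ℓ`. -/
theorem formal_solution_exists
    (K : Type*) [CommRing K] [Algebra ℚ K]
    (n m : ℕ) (hn : 1 ≤ n) (hm : 1 ≤ m)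
    (C : Fin n → Matrix (Fin m) (Fin m) (MvPowerSeries (Fin n) K))
    (hint : ∀ k ℓ : Fin n,
      (C ℓ).map (fpderiv k) - (C k).map (fpderiv ℓ) = C k * C ℓ - C ℓ * C k)
    (P : Matrix (Fin m) (Fin m) K) :
    ∃ F : Matrix (Fin m) (Fin m) (MvPowerSeries (Fin n) K),
      (∀ i j, MvPowerSeries.constantCoeff (F i j) = P i j) ∧
      ∀ ℓ : Fin n, F.map (fpderiv ℓ) = -(F * C ℓ) := by
  refine ⟨Fsol C P, fun i j => ?_, fun ℓ => ?_⟩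
  · have h0 : MvPowerSeries.coeff (0 : Fin n →₀ ℕ) (Fsol C P i j)
        = solCoeff C P 0 i j := rfl
    rw [← MvPowerSeries.coeff_zero_eq_constantCoeff_apply, h0, solCoeff_zero]
  · ext i j s
    have key := Esol C P hint s.degree s rfl ℓ
    have hk := congrArg (fun M : Matrix (Fin m) (Fin m) K => M i j) key
    simp only [Matrix.smul_apply, Matrix.neg_apply, Matrix.map_apply] at hk
    have hL : MvPowerSeries.coeff s ((Fsol C P).map (fpderiv ℓ) i j)
        = (s ℓ + 1) • solCoeff C P (s + Finsupp.single ℓ 1) i j := rfl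
    have hR : MvPowerSeries.coeff s ((-(Fsol C P * C ℓ)) i j)
        = -(MvPowerSeries.coeff s ((Fsol C P * C ℓ) i j)) := by
      simp [Matrix.neg_apply]
    rw [hL, hR]
    exact hk
end
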